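/- arXiv:math/0702295 — 4 statements merged into one kernel-verified Lean document; each statement's English description precedes it below -/
import Mathlib

section
/- There exists a map G from the set of infinite subsets of ℕ to ℕ such that for every infinite a ⊆ ℕ, the image of the set of infinite subsets of a under G is all of ℕ; that is, the infinite subsets of ℕ can be colored with countably many colors so that on the infinite subsets of any infinite set all colors are picked up. -/
open Set

private def sdSetoid : Setoid (Set ℕ) where
  r x y := (symmDiff x y).Finite
  iseqv := by
    refine ⟨fun x => ?_, fun {x y} h => ?_, fun {x y z} h1 h2 => ?_⟩
    · simp [symmDiff_self]
    · rwa [symmDiff_comm]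
    · exact (h1.union h2).subset (symmDiff_triangle x y z)

private def Rrep (c : Set ℕ) : Set ℕ :=
  (Quotient.mk sdSetoid c).out

private lemma Rrep_equiv (c : Set ℕ) : (symmDiff (Rrep c) c).Finite :=
  Quotient.exact (Quotient.out_eq (Quotient.mk sdSetoid c))

private lemma Rrep_eq_of_equiv {b c : Set ℕ} (h : (symmDiff b c).Finite) :
    Rrep b = Rrep c := by
  unfold Rrep
  congr 1
  exact Quotient.sound h

/-- There is a map `G` from the set of infinite subsets of `ℕ` to `ℕ` such that for every
infinite `a ⊆ ℕ` the image under `G` of the collection of (countably) infinite subsets of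
`a` is all of `ℕ`. -/
theorem stmt2 : ∃ G : Set ℕ → ℕ,
    ∀ a : Set ℕ, a.Infinite →
      G '' {b : Set ℕ | b ⊆ a ∧ b.Infinite} = Set.univ := by
  refine ⟨fun c => (c \ Rrep c).ncard, fun a ha => ?_⟩
  apply Set.eq_univ_of_forall
  intro n
  -- split `a` into two infinite pieces
  let f := ha.natEmbedding a
  set b : Set ℕ := Set.range (fun k => (f (2 * k) : ℕ)) with hb
  have hbinf : b.Infinite := by
    apply Set.infinite_range_of_injective
    intro i j hij
    have := f.injective (Subtype.ext hij)
    omega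
  have hbsub : b ⊆ a := by
    rintro x ⟨k, rfl⟩
    exact (f (2 * k)).2
  have habinf : (a \ b).Infinite := by
    have hsub : Set.range (fun k => (f (2 * k + 1) : ℕ)) ⊆ a \ b := by
      rintro x ⟨k, rfl⟩
      refine ⟨(f (2 * k + 1)).2, ?_⟩
      rintro ⟨m, hm⟩
      have := f.injective (Subtype.ext hm)
      omega
    refine Set.Infinite.mono hsub ?_
    apply Set.infinite_range_of_injective
    intro i j hij
    have := f.injective (Subtype.ext hij)
    omega
  set r : Set ℕ := Rrep b with hr
  have hbr : (symmDiff b r).Finite := by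
    have := Rrep_equiv b
    rwa [symmDiff_comm] at this
  have hbdiff : (b \ r).Finite := hbr.subset (fun x hx => Or.inl hx)
  -- the trimmed set
  set b' : Set ℕ := b ∩ r with hb'
  have hb'inf : b'.Infinite := by
    have : b ⊆ b' ∪ (b \ r) := by
      intro x hx
      by_cases hxr : x ∈ r
      · exact Or.inl ⟨hx, hxr⟩
      · exact Or.inr ⟨hx, hxr⟩
    by_contra hfin
    rw [Set.not_infinite] at hfin
    exact hbinf ((hfin.union hbdiff).subset this)
  -- fresh elements: from (a \ b) \ r, which is infinite
  have hfresh : ((a \ b) \ r).Infinite := by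
    have hsmall : (r \ b).Finite := hbr.subset (fun x hx => Or.inr hx)
    have hss : (a \ b) \ (r \ b) ⊆ (a \ b) \ r := by
      intro x hx
      exact ⟨hx.1, fun hxr => hx.2 ⟨hxr, hx.1.2⟩⟩
    exact Set.Infinite.mono hss (habinf.diff hsmall)
  obtain ⟨F, hFsub, hFcard⟩ := hfresh.exists_subset_card_eq n
  set c : Set ℕ := b' ∪ ↑F with hc
  have hcb : (symmDiff c b).Finite := by
    refine (hbdiff.union F.finite_toSet).subset ?_
    intro x hx
    rcases hx with hx | hx
    · rcases hx.1 with hx1 | hx1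
      · exact absurd hx1.1 hx.2
      · exact Or.inr hx1
    · -- x ∈ b \ c : then x ∉ b', so x ∉ r
      refine Or.inl ⟨hx.1, fun hxr => hx.2 (Or.inl ⟨hx.1, hxr⟩)⟩
  have hrc : Rrep c = r := by
    rw [hr]
    exact Rrep_eq_of_equiv hcb
  have hcr : c \ Rrep c = ↑F := by
    rw [hrc]
    ext x
    constructor
    · rintro ⟨hx1 | hx1, hx2⟩
      · exact absurd hx1.2 hx2
      · exact hx1
    · intro hx
      exact ⟨Or.inr hx, (hFsub hx).2⟩
  refine ⟨c, ⟨?_, ?_⟩, ?_⟩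
  · intro x hx
    rcases hx with hx | hx
    · exact hbsub hx.1
    · exact (hFsub hx).1.1
  · exact Set.Infinite.mono Set.subset_union_left hb'inf
  · simp only [hcr, Set.ncard_coe_finset, hFcard]
end

section
/- Let λ be an infinite cardinal, let ℱ be a pairwise almost disjoint family of countably infinite subsets of λ such that every infinite subset of λ has infinite intersection with some member of ℱ, and let H : [λ]^ω → λ be a map such that for every F ∈ ℱ and every infinite a ⊆ F, the image H[[a]^ω] of the set of infinite subsets of a equals F. Then there is no strictly decreasing infinite sequence C₀ ⊋ C₁ ⊋ C₂ ⊋ ⋯ of H-closed subsets of λ; that is, the family of H-closed subsets of λ is well-founded with respect to inclusion. -/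
open Cardinal Set

/-- `C` is `H`-closed: `H S ∈ C` for every countably infinite `S ⊆ C`. -/
def HClosed (H : Set Ordinal → Ordinal) (C : Set Ordinal) : Prop :=
  ∀ S : Set Ordinal, S ⊆ C → S.Countable → S.Infinite → H S ∈ C

/-- If `ℱ` is a maximal almost disjoint family of countably infinite subsets of `λ` and
`H : [λ]^ω → λ` maps the countably infinite subsets of any infinite `a ⊆ F ∈ ℱ` onto `F`,
then there is no strictly decreasing `ω`-sequence of `H`-closed subsets of `λ`. -/
theorem stmt4 (lam : Cardinal.{0}) (hlam : ℵ₀ ≤ lam) (ℱ : Set (Set Ordinal))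
    (hF : ∀ F ∈ ℱ, F ⊆ Set.Iio lam.ord ∧ F.Countable ∧ F.Infinite)
    (hAD : ∀ F ∈ ℱ, ∀ F' ∈ ℱ, F ≠ F' → (F ∩ F').Finite)
    (hMAD : ∀ S : Set Ordinal, S ⊆ Set.Iio lam.ord → S.Infinite →
      ∃ F ∈ ℱ, (S ∩ F).Infinite)
    (H : Set Ordinal → Ordinal)
    (hHcod : ∀ S : Set Ordinal, S ⊆ Set.Iio lam.ord → S.Countable → S.Infinite →
      H S ∈ Set.Iio lam.ord)
    (hH : ∀ F ∈ ℱ, ∀ a : Set Ordinal, a ⊆ F → a.Infinite →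
      H '' {S : Set Ordinal | S ⊆ a ∧ S.Countable ∧ S.Infinite} = F) :
    ¬ ∃ C : ℕ → Set Ordinal,
        (∀ n, C n ⊆ Set.Iio lam.ord ∧ HClosed H (C n)) ∧ ∀ n, C (n + 1) ⊂ C n := by
  rintro ⟨C, hC, hdec⟩
  have hmono : ∀ m n, m ≤ n → C n ⊆ C m := by
    intro m n h
    induction h with
    | refl => exact subset_rfl
    | step h ih => exact fun y hy => ih ((hdec _).subset hy)
  have hx : ∀ n, ∃ y, y ∈ C n ∧ y ∉ C (n + 1) := by
    intro n
    obtain ⟨y, hy1, hy2⟩ := exists_of_ssubset (hdec n)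
    exact ⟨y, hy1, hy2⟩
  choose x hx1 hx2 using hx
  have hxinj : Function.Injective x := by
    intro m n hmn
    by_contra h
    rcases Nat.lt_or_ge m n with h' | h'
    · exact hx2 m (hmn ▸ hmono (m + 1) n h' (hx1 n))
    · have h'' : n + 1 ≤ m := lt_of_le_of_ne h' (Ne.symm h)
      exact hx2 n (hmn ▸ hmono (n + 1) m h'' (hx1 m))
  set X : Set Ordinal := Set.range x with hXdef
  have hXinf : X.Infinite := Set.infinite_range_of_injective hxinj
  have hXsub : X ⊆ Set.Iio lam.ord := by
    rintro _ ⟨n, rfl⟩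
    exact (hC n).1 (hx1 n)
  obtain ⟨F, hF_mem, ha_inf⟩ := hMAD X hXsub hXinf
  have ha_cnt : (X ∩ F).Countable := (Set.countable_range x).mono Set.inter_subset_left
  have hFC : ∀ n, F ⊆ C n := by
    intro n
    have hdiff : (X ∩ F) \ C n ⊆ x '' Set.Iio n := by
      rintro y ⟨⟨⟨m, rfl⟩, _⟩, hy2⟩
      refine ⟨m, ?_, rfl⟩
      by_contra h
      exact hy2 (hmono n m (not_lt.mp h) (hx1 m))
    have hfin : ((X ∩ F) \ C n).Finite := ((Set.finite_Iio n).image x).subset hdiff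
    have han_inf : ((X ∩ F) ∩ C n).Infinite :=
      (ha_inf.diff hfin).mono
        (fun y hy => ⟨hy.1, Classical.byContradiction fun h => hy.2 ⟨hy.1, h⟩⟩)
    have han_sub : (X ∩ F) ∩ C n ⊆ F := fun y hy => hy.1.2
    have him := hH F hF_mem ((X ∩ F) ∩ C n) han_sub han_inf
    intro y hy
    rw [← him] at hy
    obtain ⟨S, ⟨hS1, hS2, hS3⟩, rfl⟩ := hy
    exact (hC n).2 S (fun z hz => (hS1 hz).2) hS2 hS3
  obtain ⟨y, hy⟩ := ha_inf.nonempty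
  obtain ⟨⟨m, rfl⟩, hyF⟩ := hy
  exact hx2 m (hFC (m + 1) hyF)
end

section
/- Let λ be an infinite cardinal, let ℱ be a pairwise almost disjoint family of countably infinite subsets of λ such that every infinite subset of λ has infinite intersection with some member of ℱ, and let H : [λ]^ω → λ be a map such that for every F ∈ ℱ and every infinite a ⊆ F, the image H[[a]^ω] equals F. Then for every infinite cardinal σ and every S ⊆ λ with |S| = σ there is T ⊆ S with |T| = σ such that for every H-closed set C ⊆ λ, either |C ∩ T| < σ or T ⊆ C. -/
open Cardinal Set

/-- If `ℱ` is a maximal almost disjoint family of countably infinite subsets of `λ` and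
`H : [λ]^ω → λ` maps the countably infinite subsets of any infinite `a ⊆ F ∈ ℱ` onto `F`,
then for every infinite cardinal `σ` and every `S ⊆ λ` with `|S| = σ` there is `T ⊆ S`
with `|T| = σ` such that every `H`-closed `C ⊆ λ` satisfies `|C ∩ T| < σ` or `T ⊆ C`. -/
theorem stmt5 (lam : Cardinal.{0}) (hlam : ℵ₀ ≤ lam) (ℱ : Set (Set Ordinal))
    (hF : ∀ F ∈ ℱ, F ⊆ Set.Iio lam.ord ∧ F.Countable ∧ F.Infinite)
    (hAD : ∀ F ∈ ℱ, ∀ F' ∈ ℱ, F ≠ F' → (F ∩ F').Finite)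
    (hMAD : ∀ S : Set Ordinal, S ⊆ Set.Iio lam.ord → S.Infinite →
      ∃ F ∈ ℱ, (S ∩ F).Infinite)
    (H : Set Ordinal → Ordinal)
    (hHcod : ∀ S : Set Ordinal, S ⊆ Set.Iio lam.ord → S.Countable → S.Infinite →
      H S ∈ Set.Iio lam.ord)
    (hH : ∀ F ∈ ℱ, ∀ a : Set Ordinal, a ⊆ F → a.Infinite →
      H '' {S : Set Ordinal | S ⊆ a ∧ S.Countable ∧ S.Infinite} = F)
    (σ : Cardinal.{1}) (hσ : ℵ₀ ≤ σ)
    (S : Set Ordinal) (hS : S ⊆ Set.Iio lam.ord) (hScard : Cardinal.mk S = σ) :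
    ∃ T : Set Ordinal, T ⊆ S ∧ Cardinal.mk T = σ ∧
      ∀ C : Set Ordinal, C ⊆ Set.Iio lam.ord → HClosed H C →
        Cardinal.mk ↥(C ∩ T) < σ ∨ T ⊆ C := by
  classical
  -- Key lemma: a closed set with infinite intersection with some `F ∈ ℱ` contains `F`.
  have key : ∀ F ∈ ℱ, ∀ C : Set Ordinal, HClosed H C → (C ∩ F).Infinite → F ⊆ C := by
    intro F hFm C hC hinf y hy
    have h1 := hH F hFm (C ∩ F) Set.inter_subset_right hinf
    rw [← h1] at hy
    obtain ⟨S', ⟨hS'a, hS'c, hS'i⟩, rfl⟩ := hy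
    exact hC S' (hS'a.trans Set.inter_subset_left) hS'c hS'i
  by_contra hcon
  push_neg at hcon
  -- hcon : ∀ T, T ⊆ S → mk T = σ → ∃ C, C ⊆ Iio lam.ord ∧ HClosed H C ∧ σ ≤ mk (C∩T) ∧ ¬ T ⊆ C
  have step : ∀ p : {T : Set Ordinal // T ⊆ S ∧ Cardinal.mk ↥T = σ},
      ∃ C : Set Ordinal, HClosed H C ∧ σ ≤ Cardinal.mk ↥(C ∩ p.1) ∧ ¬ p.1 ⊆ C := by
    intro p
    obtain ⟨C, _, hC2, hC3, hC4⟩ := hcon p.1 p.2.1 p.2.2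
    exact ⟨C, hC2, hC3, hC4⟩
  choose D hD1 hD2 hD3 using step
  -- the decreasing sequence of bad sets
  let g : ℕ → {T : Set Ordinal // T ⊆ S ∧ Cardinal.mk ↥T = σ} :=
    fun n => Nat.rec ⟨S, subset_rfl, hScard⟩
      (fun _ p => ⟨D p ∩ p.1, Set.inter_subset_right.trans p.2.1,
        le_antisymm ((Cardinal.mk_le_mk_of_subset Set.inter_subset_right).trans_eq p.2.2)
          (hD2 p)⟩) n
  have hgsucc : ∀ n : ℕ, (g (n + 1)).1 = D (g n) ∩ (g n).1 := fun n => rfl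
  -- escape points
  have hxex : ∀ n : ℕ, ∃ y, y ∈ (g n).1 ∧ y ∉ D (g n) := fun n => Set.not_subset.mp (hD3 (g n))
  choose x hxmem hxnot using hxex
  -- monotonicity
  have hmono : ∀ n m : ℕ, n ≤ m → (g m).1 ⊆ (g n).1 := by
    intro n m hnm
    induction hnm with
    | refl => exact subset_rfl
    | step h ih =>
        exact ((hgsucc _) ▸ Set.inter_subset_right).trans ih
  have hcm : ∀ n m : ℕ, n < m → x m ∈ D (g n) := by
    intro n m hnm
    have : x m ∈ (g (n + 1)).1 := hmono (n + 1) m hnm (hxmem m)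
    rw [hgsucc n] at this
    exact this.1
  -- injectivity of the escape points
  have hne : ∀ n m : ℕ, n < m → x n ≠ x m := by
    intro n m hnm he
    exact hxnot n (he ▸ hcm n m hnm)
  have hinj : Function.Injective x := by
    intro a b hab
    rcases lt_trichotomy a b with h | h | h
    · exact absurd hab (hne a b h)
    · exact h
    · exact absurd hab.symm (hne b a h)
  -- the set of escape points
  set X : Set Ordinal := Set.range x with hXdef
  have hXsub : X ⊆ Set.Iio lam.ord := by
    rintro _ ⟨n, rfl⟩
    exact hS ((g n).2.1 (hxmem n))
  have hXinf : X.Infinite := Set.infinite_range_of_injective hinj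
  obtain ⟨F, hFm, hXF⟩ := hMAD X hXsub hXinf
  -- F is contained in every D (g n)
  have hDF : ∀ n : ℕ, (D (g n) ∩ F).Infinite := by
    intro n
    have hfin : (x '' Set.Iic n).Finite := (Set.finite_Iic n).image x
    refine Set.Infinite.mono ?_ (hXF.diff hfin)
    rintro y ⟨⟨hyX, hyF⟩, hyni⟩
    obtain ⟨m, rfl⟩ := hyX
    have hnm : n < m := by
      by_contra h
      exact hyni ⟨m, not_lt.mp h, rfl⟩
    exact ⟨hcm n m hnm, hyF⟩
  -- contradiction
  obtain ⟨y, hyX, hyF⟩ := hXF.nonempty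
  obtain ⟨m, rfl⟩ := hyX
  exact hxnot m (key F hFm (D (g m)) (hD1 (g m)) (hDF m) hyF)
end

section
/- Let λ be an ω-inaccessible cardinal, let ℱ be a pairwise almost disjoint family of subsets of λ, each of order type ω, such that every infinite subset of λ has infinite intersection with some member of ℱ, and let H : [λ]^ω → λ be a map such that for every F ∈ ℱ and every infinite a ⊆ F the image H[[a]^ω] equals F, and H(S) = 0 whenever S ∈ [λ]^ω is contained in no member of ℱ. Then the family 𝒜 of all H-closed subsets of λ of cardinality less than λ is good over λ. -/
open Cardinal Set

/-- A set of ordinals has order type `ω` iff it is countably infinite and each of its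
proper initial segments is finite. -/
def HasOrderTypeOmega (F : Set Ordinal) : Prop :=
  F.Countable ∧ F.Infinite ∧ ∀ ξ ∈ F, (F ∩ Set.Iio ξ).Finite

/-- A family `𝒜` of proper subsets of `λ` (identified with the set `Set.Iio lam.ord` of
ordinals below `λ`) is *good* over `λ`. -/
def IsGoodFamily (lam : Cardinal.{0}) (𝒜 : Set (Set Ordinal)) : Prop :=
  (∀ A ∈ 𝒜, A ⊂ Set.Iio lam.ord) ∧
  (∀ α : Ordinal, α < lam.ord → Set.Iio α ∈ 𝒜) ∧
  (∀ S : Set Ordinal, S ⊆ Set.Iio lam.ord → Cardinal.mk S < Cardinal.lift.{1} lam →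
      ∃ A ∈ 𝒜, S ⊆ A) ∧
  (∀ S : Set Ordinal, S ⊆ Set.Iio lam.ord → Cardinal.mk S = Cardinal.aleph 1 →
      ∃ T : Set Ordinal, T ⊆ S ∧ Cardinal.mk T = Cardinal.aleph 1 ∧
        ∀ A ∈ 𝒜, Cardinal.mk ↥(A ∩ T) ≤ ℵ₀ ∨ T ⊆ A)

/-!
Every `H`-closed set `A` absorbs each `F ∈ ℱ` that it meets in an infinite set, because `H` maps
the countably infinite subsets of `F ∩ A` onto `F`. Initial segments are `H`-closed because a
member of `ℱ` has order type `ω`, so it cannot contain infinitely many points below `α` without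
lying entirely below `α`. A set `S` of size `< λ` is covered by its `H`-closure, built in `ω₁`
steps (enough, as `ω₁` has uncountable cofinality), which has size at most `|S| ^ ℵ₀ < λ`.

For the `ℵ₁` condition, suppose every `T ⊆ S` of size `ℵ₁` is split by some closed `B`. Iterating
gives `T₀ ⊇ T₁ ⊇ ⋯` with `T (n+1) = B n ∩ T n` and points `s n ∈ T n \ B n`. Some `F ∈ ℱ` meets
`{s n}` infinitely, hence meets each `B n` infinitely, hence is absorbed by each `B n`; but `F`
contains some `s n ∉ B n`.
-/

open Ordinal

universe u

theorem HClosed.of_finite {H : Set Ordinal → Ordinal} {C : Set Ordinal} (hC : C.Finite) :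
    HClosed H C :=
  fun _ hS _ hSi => absurd (hC.subset hS) hSi

section Absorption

variable {H : Set Ordinal.{u} → Ordinal.{u}} {F : Set Ordinal.{u}}

theorem apply_mem_of_subset
    (hHF : ∀ a : Set Ordinal, a ⊆ F → a.Infinite →
      H '' {S : Set Ordinal | S ⊆ a ∧ S.Countable ∧ S.Infinite} = F)
    {T : Set Ordinal} (hTF : T ⊆ F) (hT : T.Countable) (hTi : T.Infinite) : H T ∈ F :=
  hHF T hTF hTi ▸ mem_image_of_mem H ⟨subset_rfl, hT, hTi⟩

theorem HClosed.subset_of_infinite_inter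
    (hHF : ∀ a : Set Ordinal, a ⊆ F → a.Infinite →
      H '' {S : Set Ordinal | S ⊆ a ∧ S.Countable ∧ S.Infinite} = F)
    {A : Set Ordinal} (hA : HClosed H A) (hinf : (F ∩ A).Infinite) : F ⊆ A := by
  rw [← hHF (F ∩ A) inter_subset_left hinf]
  rintro _ ⟨S, ⟨hS, hSc, hSi⟩, rfl⟩
  exact hA S (hS.trans inter_subset_right) hSc hSi

theorem subset_Iio_of_infinite_subset {S : Set Ordinal} {α : Ordinal}
    (hF : ∀ ξ ∈ F, (F ∩ Iio ξ).Finite) (hSF : S ⊆ F) (hS : S.Infinite) (hSα : S ⊆ Iio α) :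
    F ⊆ Iio α := by
  intro ξ hξ
  by_contra hαξ
  refine hS ((hF ξ hξ).subset fun x hx => ⟨hSF hx, ?_⟩)
  exact mem_Iio.2 ((mem_Iio.1 (hSα hx)).trans_le (not_lt.1 hαξ))

end Absorption

theorem hClosed_Iio {ℱ : Set (Set Ordinal.{u})} {H : Set Ordinal.{u} → Ordinal.{u}}
    (hℱ : ∀ F ∈ ℱ, ∀ ξ ∈ F, (F ∩ Iio ξ).Finite)
    (hH : ∀ F ∈ ℱ, ∀ a : Set Ordinal, a ⊆ F → a.Infinite →
      H '' {S : Set Ordinal | S ⊆ a ∧ S.Countable ∧ S.Infinite} = F)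
    {β : Ordinal}
    (hH0 : ∀ S : Set Ordinal, S ⊆ Iio β → S.Countable → S.Infinite →
      (∀ F ∈ ℱ, ¬ S ⊆ F) → H S = 0)
    {α : Ordinal} (hαβ : α ≤ β) : HClosed H (Iio α) := by
  intro S hS hSc hSi
  by_cases hcov : ∃ F ∈ ℱ, S ⊆ F
  · obtain ⟨F, hF, hSF⟩ := hcov
    exact subset_Iio_of_infinite_subset (hℱ F hF) hSF hSi hS
      (apply_mem_of_subset (hH F hF) hSF hSc hSi)
  · push Not at hcov
    rw [hH0 S (hS.trans (Iio_subset_Iio hαβ)) hSc hSi hcov]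
    obtain ⟨x, hx⟩ := hSi.nonempty
    exact (zero_le (a := x)).trans_lt (hS hx)


section Closure

variable {H : Set Ordinal.{u} → Ordinal.{u}} {S₀ : Set Ordinal.{u}}

noncomputable def closureStage (H : Set Ordinal.{u} → Ordinal.{u}) (S₀ : Set Ordinal.{u}) :
    Ordinal.{u} → Set Ordinal.{u} :=
  Ordinal.lt_wf.fix fun o stage =>
    S₀ ∪ H '' {S | S ⊆ ⋃ (p) (hp : p < o), stage p hp ∧ S.Countable ∧ S.Infinite}

theorem closureStage_eq (o : Ordinal.{u}) :
    closureStage H S₀ o =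
      S₀ ∪ H '' {S | S ⊆ ⋃ p < o, closureStage H S₀ p ∧ S.Countable ∧ S.Infinite} :=
  Ordinal.lt_wf.fix_eq _ o

theorem closureStage_subset {V : Set Ordinal.{u}} (hV : HClosed H V) (hS₀ : S₀ ⊆ V)
    (o : Ordinal.{u}) : closureStage H S₀ o ⊆ V := by
  induction o using WellFoundedLT.induction with
  | _ o ih =>
    rw [closureStage_eq]
    refine union_subset hS₀ ?_
    rintro _ ⟨S, ⟨hS, hSc, hSi⟩, rfl⟩
    exact hV S (hS.trans (iUnion₂_subset ih)) hSc hSi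

theorem mk_biUnion_lt_omega_one_le {α : Type (u + 1)} {A : Ordinal.{u} → Set α}
    {c : Cardinal.{u + 1}} (hc : ℵ₁ ≤ c) {o : Ordinal.{u}} (ho : o ≤ ω₁)
    (hA : ∀ p < o, #(A p) ≤ c) : #(⋃ p < o, A p) ≤ c := by
  have hIio : #(Iio o) ≤ c := by
    refine le_trans ?_ hc
    calc #(Iio o) ≤ #(Iio (ω₁ : Ordinal.{u})) := mk_le_mk_of_subset (Iio_subset_Iio ho)
      _ = ℵ₁ := by simp [Cardinal.mk_Iio_ordinal, card_omega, lift_aleph]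
  have hc₀ : ℵ₀ ≤ c := aleph0_le_aleph 1 |>.trans hc
  calc #(⋃ p < o, A p) ≤ #(Iio o) * ⨆ p : Iio o, #(A p) := mk_biUnion_le A (Iio o)
    _ ≤ c * c := mul_le_mul' hIio (ciSup_le' fun p => hA p p.2)
    _ = c := mul_eq_self hc₀

theorem mk_closureStage_le {c : Cardinal.{u + 1}} (hS₀ : #S₀ ≤ c) (hc : c ^ ℵ₀ = c)
    (hc₁ : ℵ₁ ≤ c) (o : Ordinal.{u}) (ho : o ≤ ω₁) : #(closureStage H S₀ o) ≤ c := by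
  have hc₀ : ℵ₀ ≤ c := aleph0_le_aleph 1 |>.trans hc₁
  induction o using WellFoundedLT.induction with
  | _ o ih =>
    set X : Set Ordinal.{u} := ⋃ p < o, closureStage H S₀ p
    have hX : #X ≤ c := mk_biUnion_lt_omega_one_le hc₁ ho fun p hp => ih p hp (hp.le.trans ho)
    have hsubsets : #{S | S ⊆ X ∧ S.Countable ∧ S.Infinite} ≤ c :=
      calc #{S | S ⊆ X ∧ S.Countable ∧ S.Infinite}
          ≤ #{S : Set Ordinal | S ⊆ X ∧ #S ≤ ℵ₀} :=
            mk_le_mk_of_subset fun S hS => ⟨hS.1, mk_le_aleph0_iff.2 hS.2.1.to_subtype⟩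
        _ ≤ max #X ℵ₀ ^ ℵ₀ := mk_bounded_subset_le X ℵ₀
        _ ≤ c ^ ℵ₀ := power_le_power_right (max_le hX hc₀)
        _ = c := hc
    rw [closureStage_eq]
    calc #↥(S₀ ∪ H '' {S | S ⊆ X ∧ S.Countable ∧ S.Infinite})
        ≤ #S₀ + #(H '' {S | S ⊆ X ∧ S.Countable ∧ S.Infinite}) := mk_union_le _ _
      _ ≤ c + c := add_le_add hS₀ (mk_image_le.trans hsubsets)
      _ = c := add_eq_self hc₀

theorem hClosed_biUnion_closureStage :
    HClosed H (⋃ o < (ω₁ : Ordinal.{u}), closureStage H S₀ o) := by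
  intro T hT hTc hTi
  have : Countable T := hTc.to_subtype
  have hstage : ∀ x : T, ∃ o < (ω₁ : Ordinal.{u}), x.1 ∈ closureStage H S₀ o := fun x => by
    simpa using hT x.2
  choose o ho hxo using hstage
  set β := ⨆ x : T, Order.succ (o x)
  have hβ : β < ω₁ := iSup_lt_omega_one fun x => (isSuccLimit_omega 1).succ_lt (ho x)
  have hTβ : T ⊆ ⋃ p < β, closureStage H S₀ p := fun x hx =>
    mem_iUnion₂_of_mem ((Order.lt_succ _).trans_le (Ordinal.le_iSup _ ⟨x, hx⟩)) (hxo ⟨x, hx⟩)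
  refine mem_iUnion₂_of_mem hβ ?_
  rw [closureStage_eq]
  exact Or.inr ⟨T, ⟨hTβ, hTc, hTi⟩, rfl⟩

theorem exists_hClosed_superset_mk_le {V : Set Ordinal.{u}} (hV : HClosed H V)
    (hS₀V : S₀ ⊆ V) (hS₀ : S₀.Infinite) :
    ∃ C, S₀ ⊆ C ∧ C ⊆ V ∧ HClosed H C ∧ #C ≤ #S₀ ^ ℵ₀ := by
  set c := #S₀ ^ ℵ₀
  have hc : c ^ ℵ₀ = c := by rw [← power_mul, aleph0_mul_aleph0]
  have hc₁ : ℵ₁ ≤ c :=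
    calc ℵ₁ ≤ 𝔠 := aleph_one_le_continuum
      _ = 2 ^ ℵ₀ := two_power_aleph0.symm
      _ ≤ c := power_le_power_right
        ((natCast_lt_aleph0 (n := 2)).le.trans (infinite_iff.1 hS₀.to_subtype))
  have hS₀c : #S₀ ≤ c := self_le_power _ one_le_aleph0
  refine ⟨⋃ o < (ω₁ : Ordinal.{u}), closureStage H S₀ o, ?_, ?_, hClosed_biUnion_closureStage,
    mk_biUnion_lt_omega_one_le hc₁ le_rfl fun o ho => mk_closureStage_le hS₀c hc hc₁ o ho.le⟩
  · intro x hx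
    refine mem_iUnion₂_of_mem (omega_pos 1) ?_
    rw [closureStage_eq]
    exact Or.inl hx
  · exact iUnion₂_subset fun o _ => closureStage_subset hV hS₀V o

end Closure

theorem lift_power_aleph0_lt {lam : Cardinal.{u}} (hlam : ∀ μ < lam, μ ^ ℵ₀ < lam)
    {ν : Cardinal.{max u v}} (hν : ν < lift.{v} lam) : ν ^ ℵ₀ < lift.{v} lam := by
  obtain ⟨μ, rfl⟩ := mem_range_lift_of_le hν.le
  rw [← lift_aleph0.{v, u}, ← lift_power]
  exact lift_lt.2 (hlam μ (lift_lt.1 hν))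

section AlmostDisjoint

variable {α : Type*} {ℱ : Set (Set α)} {V : Set α}

theorem exists_apply_mem_of_absorbing (hℱ : ∀ S ⊆ V, S.Infinite → ∃ F ∈ ℱ, (S ∩ F).Infinite)
    {B : ℕ → Set α} (hB : ∀ n, ∀ F ∈ ℱ, (F ∩ B n).Infinite → F ⊆ B n)
    {s : ℕ → α} (hsV : ∀ n, s n ∈ V) (hs : ∀ n m, n < m → s m ∈ B n) : ∃ n, s n ∈ B n := by
  by_contra! hsB
  have hinj : Function.Injective s :=
    Function.Injective.of_lt_imp_ne fun n m hnm hsnm => hsB n (hsnm ▸ hs n m hnm)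
  obtain ⟨F, hF, hsF⟩ := hℱ (range s) (range_subset_iff.2 hsV) (infinite_range_of_injective hinj)
  have hFB : ∀ n, F ⊆ B n := fun n => by
    refine hB n F hF ((hsF.sdiff ((finite_Iic n).image s)).mono ?_)
    rintro _ ⟨⟨⟨m, rfl⟩, hmF⟩, hmn⟩
    exact ⟨hmF, hs n m (not_le.1 fun hmn' => hmn ⟨m, hmn', rfl⟩)⟩
  obtain ⟨_, ⟨n, rfl⟩, hnF⟩ := hsF.nonempty
  exact hsB n (hFB n hnF)

theorem exists_subset_mk_eq_aleph_one_of_absorbing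
    (hℱ : ∀ S ⊆ V, S.Infinite → ∃ F ∈ ℱ, (S ∩ F).Infinite)
    {𝒜 : Set (Set α)} (h𝒜 : ∀ A ∈ 𝒜, ∀ F ∈ ℱ, (F ∩ A).Infinite → F ⊆ A)
    {S : Set α} (hSV : S ⊆ V) (hS : #S = ℵ₁) :
    ∃ T ⊆ S, #T = ℵ₁ ∧ ∀ A ∈ 𝒜, #↥(A ∩ T) ≤ ℵ₀ ∨ T ⊆ A := by
  by_contra! hbad
  have hstep : ∀ T : {T : Set α // T ⊆ S ∧ #T = ℵ₁},
      ∃ A ∈ 𝒜, (A ∩ T.1 ⊆ S ∧ #↥(A ∩ T.1) = ℵ₁) ∧ ¬ T.1 ⊆ A := by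
    rintro ⟨T, hTS, hT⟩
    obtain ⟨A, hA, hAT, hTA⟩ := hbad T hTS hT
    refine ⟨A, hA, ⟨inter_subset_right.trans hTS, le_antisymm ?_ ?_⟩, hTA⟩
    · exact (mk_le_mk_of_subset inter_subset_right).trans_eq hT
    · exact succ_aleph0.symm.trans_le (Order.succ_le_of_lt hAT)
  choose A hA𝒜 hAT hTA using hstep
  set T : ℕ → {T : Set α // T ⊆ S ∧ #T = ℵ₁} :=
    fun n => (fun T => ⟨A T ∩ T.1, hAT T⟩)^[n] ⟨S, subset_rfl, hS⟩
  have hT_succ : ∀ n, (T (n + 1)).1 = A (T n) ∩ (T n).1 := fun n =>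
    congrArg Subtype.val (Function.iterate_succ_apply' _ n _)
  have hT_anti : Antitone fun n => (T n).1 :=
    antitone_nat_of_succ_le fun n => (hT_succ n).symm ▸ inter_subset_right
  choose s hsT hsA using fun n => not_subset.1 (hTA (T n))
  obtain ⟨n, hn⟩ := exists_apply_mem_of_absorbing hℱ (fun n => h𝒜 _ (hA𝒜 (T n)))
    (fun n => hSV ((T n).2.1 (hsT n)))
    (fun n m hnm => ((hT_succ n).le.trans inter_subset_left) (hT_anti hnm (hsT m)))
  exact hsA n hn

end AlmostDisjoint

theorem stmt10_general (lam : Cardinal.{0}) (hlam : ∀ mu < lam, mu ^ ℵ₀ < lam)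
    (ℱ : Set (Set Ordinal))
    (hF : ∀ F ∈ ℱ, F ⊆ Set.Iio lam.ord ∧ HasOrderTypeOmega F)
    (hMAD : ∀ S : Set Ordinal, S ⊆ Set.Iio lam.ord → S.Infinite →
      ∃ F ∈ ℱ, (S ∩ F).Infinite)
    (H : Set Ordinal → Ordinal)
    (hH : ∀ F ∈ ℱ, ∀ a : Set Ordinal, a ⊆ F → a.Infinite →
      H '' {S : Set Ordinal | S ⊆ a ∧ S.Countable ∧ S.Infinite} = F)
    (hH0 : ∀ S : Set Ordinal, S ⊆ Set.Iio lam.ord → S.Countable → S.Infinite →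
      (∀ F ∈ ℱ, ¬ S ⊆ F) → H S = 0) :
    IsGoodFamily lam
      {C : Set Ordinal | C ⊆ Set.Iio lam.ord ∧ HClosed H C ∧
        Cardinal.mk ↥C < Cardinal.lift.{1} lam} := by
  have hIio : ∀ α ≤ lam.ord, HClosed H (Iio α) :=
    fun α hα => hClosed_Iio (fun F hF' => (hF F hF').2.2.2) hH hH0 hα
  refine ⟨?_, ?_, ?_, ?_⟩
  · rintro A ⟨hA, -, hAlam⟩
    refine hA.ssubset_of_ne fun hAeq => hAlam.ne ?_
    rw [hAeq, Cardinal.mk_Iio_ordinal, card_ord]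
  · intro α hα
    refine ⟨Iio_subset_Iio hα.le, hIio α hα.le, ?_⟩
    rw [Cardinal.mk_Iio_ordinal]
    exact lift_lt.2 (lt_ord.1 hα)
  · intro S hS hSlam
    rcases S.finite_or_infinite with hSfin | hSinf
    · exact ⟨S, ⟨hS, HClosed.of_finite hSfin, hSlam⟩, subset_rfl⟩
    · obtain ⟨C, hSC, hC, hCcl, hCS⟩ := exists_hClosed_superset_mk_le (hIio _ le_rfl) hS hSinf
      exact ⟨C, ⟨hC, hCcl, hCS.trans_lt (lift_power_aleph0_lt hlam hSlam)⟩, hSC⟩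
  · intro S hS hSℵ₁
    exact exists_subset_mk_eq_aleph_one_of_absorbing hMAD
      (fun A hA F hF hFA => hA.2.1.subset_of_infinite_inter (hH F hF) hFA) hS hSℵ₁

/-- Let `λ` be ω-inaccessible, `ℱ` a maximal almost disjoint family of subsets of `λ` of
order type `ω`, and `H : [λ]^ω → λ` a map such that for every `F ∈ ℱ` and infinite
`a ⊆ F` the image `H[[a]^ω]` equals `F`, and `H S = 0` whenever `S ∈ [λ]^ω` is contained
in no member of `ℱ`. Then the family of all `H`-closed subsets of `λ` of cardinality
less than `λ` is good over `λ`. -/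
theorem stmt10 (lam : Cardinal.{0}) (hlam : ∀ mu < lam, mu ^ ℵ₀ < lam)
    (ℱ : Set (Set Ordinal))
    (hF : ∀ F ∈ ℱ, F ⊆ Set.Iio lam.ord ∧ HasOrderTypeOmega F)
    (hAD : ∀ F ∈ ℱ, ∀ F' ∈ ℱ, F ≠ F' → (F ∩ F').Finite)
    (hMAD : ∀ S : Set Ordinal, S ⊆ Set.Iio lam.ord → S.Infinite →
      ∃ F ∈ ℱ, (S ∩ F).Infinite)
    (H : Set Ordinal → Ordinal)
    (hHcod : ∀ S : Set Ordinal, S ⊆ Set.Iio lam.ord → S.Countable → S.Infinite →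
      H S ∈ Set.Iio lam.ord)
    (hH : ∀ F ∈ ℱ, ∀ a : Set Ordinal, a ⊆ F → a.Infinite →
      H '' {S : Set Ordinal | S ⊆ a ∧ S.Countable ∧ S.Infinite} = F)
    (hH0 : ∀ S : Set Ordinal, S ⊆ Set.Iio lam.ord → S.Countable → S.Infinite →
      (∀ F ∈ ℱ, ¬ S ⊆ F) → H S = 0) :
    IsGoodFamily lam
      {C : Set Ordinal | C ⊆ Set.Iio lam.ord ∧ HClosed H C ∧
        Cardinal.mk ↥C < Cardinal.lift.{1} lam} :=
  stmt10_general lam hlam ℱ hF hMAD H hH hH0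
end
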